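/- Let V be a finite-dimensional real vector space and let C ⊆ V be a closed additive subgroup. Then: (i) Cospan(C) := {v ∈ V : t·v ∈ C for all t ∈ ℝ} is a linear subspace of V (the largest linear subspace contained in C); (ii) the image of C in the quotient vector space V / Cospan(C) is a discrete additive subgroup; (iii) if moreover C spans V over ℝ, then C / Cospan(C) is a lattice in V / Cospan(C), i.e. it is discrete and the quotient of V / Cospan(C) by it is compact. -/

import Mathlib

/-! A closed subgroup `D` of a finite-dimensional real normed space that contains no line is
discrete: otherwise there are nonzero `x n ∈ D` tending to `0`, their normalisations
accumulate at a unit vector `u`, and `⌊t / ‖x n‖⌋ • x n ∈ D` tends to `t • u`, so the line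
`ℝ u` lies in `D`. The image of `C` in `V / Cospan(C)` is closed and contains no line, hence
is discrete. If `C` spans `V`, a basis of `V` chosen inside `C` spans a `ℤ`-lattice contained
in `C`, and the compact fundamental parallelepiped of that lattice maps onto the quotient. -/

open Filter Topology

theorem QuotientAddGroup.mk_mem_map_mk'_iff {G : Type*} [AddCommGroup G] {N H : AddSubgroup G}
    (hNH : N ≤ H) {g : G} : (g : G ⧸ N) ∈ H.map (QuotientAddGroup.mk' N) ↔ g ∈ H := by
  change QuotientAddGroup.mk' N g ∈ _ ↔ _
  rw [← AddSubgroup.mem_comap, QuotientAddGroup.comap_map_mk', sup_eq_right.2 hNH]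

theorem AddSubgroup.isClosed_map_mk' {G : Type*} [AddCommGroup G] [TopologicalSpace G]
    [IsTopologicalAddGroup G] {N H : AddSubgroup G} (hNH : N ≤ H) (hH : IsClosed (H : Set G)) :
    IsClosed (H.map (QuotientAddGroup.mk' N) : Set (G ⧸ N)) := by
  rw [← (QuotientAddGroup.isQuotientMap_mk N).isClosed_preimage]
  convert hH using 1
  ext g
  exact QuotientAddGroup.mk_mem_map_mk'_iff hNH

namespace AddSubgroup

section Semiring

variable (R : Type*) {M : Type*} [Semiring R] [AddCommGroup M] [Module R M]

def cospan (C : AddSubgroup M) : Submodule R M where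
  carrier := {v | ∀ t : R, t • v ∈ C}
  add_mem' ha hb t := by simpa only [smul_add] using C.add_mem (ha t) (hb t)
  zero_mem' t := by simpa only [smul_zero] using C.zero_mem
  smul_mem' s _ hv t := by simpa only [smul_smul] using hv (t * s)

variable {R} {C : AddSubgroup M}

theorem le_cospan_iff {W : Submodule R M} : W ≤ C.cospan R ↔ (W : Set M) ⊆ C :=
  ⟨fun h v hv => by simpa using h hv 1, fun h _ hv t => h (W.smul_mem t hv)⟩

theorem coe_cospan_subset : (C.cospan R : Set M) ⊆ C := le_cospan_iff.1 le_rfl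

end Semiring

theorem cospan_map_mkQ_cospan_eq_bot {R M : Type*} [Ring R] [AddCommGroup M] [Module R M]
    (C : AddSubgroup M) : (C.map (C.cospan R).mkQ.toAddMonoidHom).cospan R = ⊥ := by
  refine (Submodule.eq_bot_iff _).2 fun x hx => ?_
  obtain ⟨v, rfl⟩ := Submodule.Quotient.mk_surjective _ x
  exact (Submodule.Quotient.mk_eq_zero _).2 fun t =>
    (QuotientAddGroup.mk_mem_map_mk'_iff coe_cospan_subset).1 (hx t)

end AddSubgroup

theorem tendsto_floor_div_mul_self {ι : Type*} {l : Filter ι} {r : ι → ℝ}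
    (hr : Tendsto r l (𝓝 0)) (hr_pos : ∀ i, 0 < r i) (t : ℝ) :
    Tendsto (fun i => (⌊t / r i⌋ : ℝ) * r i) l (𝓝 t) := by
  have hfract : Tendsto (fun i => Int.fract (t / r i) * r i) l (𝓝 0) :=
    squeeze_zero (fun i => (Int.fract_div_mul_self_mem_Ico _ t (hr_pos i)).1)
      (fun i => (Int.fract_div_mul_self_mem_Ico _ t (hr_pos i)).2.le) hr
  convert (tendsto_const_nhds (x := t)).sub hfract using 1
  · ext i
    rw [eq_sub_iff_add_eq, add_comm, ← zsmul_eq_mul,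
      Int.fract_div_mul_self_add_zsmul_eq _ _ (hr_pos i).ne']
  · rw [sub_zero]

section NormedSpace

variable {E : Type*} [NormedAddCommGroup E] [NormedSpace ℝ E]

theorem AddSubgroup.smul_mem_of_tendsto_normalize {D : AddSubgroup E}
    (hD : IsClosed (D : Set E)) {ι : Type*} {l : Filter ι} [l.NeBot] {x : ι → E} {u : E}
    (hxD : ∀ i, x i ∈ D) (hx_ne : ∀ i, x i ≠ 0) (hx : Tendsto x l (𝓝 0))
    (hu : Tendsto (fun i => ‖x i‖⁻¹ • x i) l (𝓝 u)) (t : ℝ) : t • u ∈ D := by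
  have hnorm : Tendsto (fun i => ‖x i‖) l (𝓝 0) := by simpa using hx.norm
  have hcoef := tendsto_floor_div_mul_self hnorm (fun i => norm_pos_iff.2 (hx_ne i)) t
  have hmul : Tendsto (fun i => ⌊t / ‖x i‖⌋ • x i) l (𝓝 (t • u)) := by
    convert hcoef.smul hu using 2 with i
    rw [smul_smul, mul_assoc, mul_inv_cancel₀ (norm_ne_zero_iff.2 (hx_ne i)), mul_one,
      Int.cast_smul_eq_zsmul]
  exact hD.mem_of_tendsto hmul (Eventually.of_forall fun i => D.zsmul_mem (hxD i) _)

theorem AddSubgroup.discreteTopology_of_cospan_eq_bot [FiniteDimensional ℝ E]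
    {D : AddSubgroup E} (hD : IsClosed (D : Set E)) (h : D.cospan ℝ = ⊥) : DiscreteTopology D := by
  refine discreteTopology_of_isOpen_singleton_zero (Metric.isOpen_singleton_iff.2 ?_)
  by_contra! hsmall
  choose x hx_lt hx_ne using fun n : ℕ => hsmall (1 / (n + 1)) Nat.one_div_pos_of_nat
  have hx_ne' : ∀ n, (x n : E) ≠ 0 := fun n => by exact_mod_cast hx_ne n
  have hx_lt' : ∀ n, ‖(x n : E)‖ ≤ 1 / (n + 1) := fun n => by simpa using (hx_lt n).le
  have hx : Tendsto (fun n => (x n : E)) atTop (𝓝 0) :=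
    squeeze_zero_norm hx_lt' tendsto_one_div_add_atTop_nhds_zero_nat
  have hsphere : ∀ n, ‖(x n : E)‖⁻¹ • (x n : E) ∈ Metric.sphere (0 : E) 1 := fun n => by
    simp [norm_smul, hx_ne' n]
  obtain ⟨u, hu, φ, hφ, hconv⟩ := (isCompact_sphere (0 : E) 1).tendsto_subseq hsphere
  have hu0 : u ∈ D.cospan ℝ := fun t => D.smul_mem_of_tendsto_normalize hD
    (fun n => (x (φ n)).2) (fun n => hx_ne' (φ n)) (hx.comp hφ.tendsto_atTop) hconv t
  rw [h, Submodule.mem_bot] at hu0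
  simp [hu0] at hu

end NormedSpace

theorem AddSubgroup.isCompact_range_of_periodic {E F : Type*} [NormedAddCommGroup E]
    [NormedSpace ℝ E] [FiniteDimensional ℝ E] [TopologicalSpace F] {C : AddSubgroup E}
    (hC : Submodule.span ℝ (C : Set E) = ⊤) {f : E → F} (hf : Continuous f)
    (hper : ∀ z w, w ∈ C → f (z + w) = f z) : IsCompact (Set.range f) := by
  let b := Module.Basis.ofSpan hC.ge
  have : Finite _ := Module.Finite.finite_basis b
  have hbC : Submodule.span ℤ (Set.range b) ≤ C.toIntSubmodule :=
    Submodule.span_le.2 (Module.Basis.ofSpan_subset hC.ge)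
  exact IsZLattice.isCompact_range_of_periodic _ f hf fun z w hw => hper z w (hbC hw)

/-- Let `V` be a finite-dimensional real vector space and let
`C ⊆ V` be a closed additive subgroup.  Then:
(i) `Cospan(C) = {v ∈ V : t·v ∈ C for all t ∈ ℝ}` is a linear subspace of `V`,
the largest linear subspace contained in `C`;
(ii) the image of `C` in the quotient `V / Cospan(C)` is a discrete additive
subgroup;
(iii) if moreover `C` spans `V` over ℝ, then `C / Cospan(C)` is a lattice in
`V / Cospan(C)`: it is discrete and the quotient of `V / Cospan(C)` by it is
compact. -/
theorem stmt11 {V : Type*} [NormedAddCommGroup V] [NormedSpace ℝ V]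
    [FiniteDimensional ℝ V] (C : AddSubgroup V) (hC : IsClosed (C : Set V)) :
    ∃ W : Submodule ℝ V,
      -- (i): W is the subspace {v | ∀ t, t • v ∈ C}, and it is the largest
      -- linear subspace contained in C
      (W : Set V) = {v : V | ∀ t : ℝ, t • v ∈ C} ∧
      (W : Set V) ⊆ (C : Set V) ∧
      (∀ W' : Submodule ℝ V, (W' : Set V) ⊆ (C : Set V) → W' ≤ W) ∧
      -- (ii): the image of C in V / Cospan(C) is discrete
      DiscreteTopology
        (AddSubgroup.map (QuotientAddGroup.mk' W.toAddSubgroup) C) ∧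
      -- (iii): if C spans V, then C / Cospan(C) is cocompact in V / Cospan(C)
      (Submodule.span ℝ (C : Set V) = ⊤ →
        CompactSpace
          ((V ⧸ W.toAddSubgroup) ⧸
            AddSubgroup.map (QuotientAddGroup.mk' W.toAddSubgroup) C)) := by
  set W := C.cospan ℝ
  have : IsClosed (W : Set V) := W.closed_of_finiteDimensional
  refine ⟨W, rfl, AddSubgroup.coe_cospan_subset, fun _ => AddSubgroup.le_cospan_iff.2, ?_,
    fun hspan => ?_⟩
  · -- The normed space `V ⧸ W` has `V ⧸ W.toAddSubgroup` as its underlying topological group.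
    exact AddSubgroup.discreteTopology_of_cospan_eq_bot (E := V ⧸ W)
      (AddSubgroup.isClosed_map_mk' AddSubgroup.coe_cospan_subset hC)
      C.cospan_map_mkQ_cospan_eq_bot
  · set C' := C.map (QuotientAddGroup.mk' W.toAddSubgroup)
    let f : V →+ (V ⧸ W.toAddSubgroup) ⧸ C' :=
      (QuotientAddGroup.mk' C').comp (QuotientAddGroup.mk' W.toAddSubgroup)
    have hf_surj : Function.Surjective f :=
      QuotientAddGroup.mk_surjective.comp QuotientAddGroup.mk_surjective
    have hf_per (z w : V) (hw : w ∈ C) : f (z + w) = f z := by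
      have hfw : f w = 0 := (QuotientAddGroup.eq_zero_iff _).2 (C.mem_map_of_mem _ hw)
      rw [map_add, hfw, add_zero]
    rw [← isCompact_univ_iff, ← hf_surj.range_eq]
    exact C.isCompact_range_of_periodic hspan
      (QuotientAddGroup.continuous_mk.comp QuotientAddGroup.continuous_mk) hf_per
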